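/- arXiv:2507.02251 — 3 statements merged into one kernel-verified Lean document; each statement's English description precedes it below -/
import Mathlib

section
/- Let H be a complex Hilbert space, let z₁, z₂ ∈ ℂ, and let R₁, R₂, S₁, S₂, B ∈ B(H) be bounded operators satisfying S₁² = R₁, S₂² = R₂, and the first resolvent equation R₁ − R₂ = (z₁ − z₂) R₁ R₂. Define A₁ := −S₁ B S₁ and A₂ := −S₂ B S₂, and assume that I − A₁ and I − A₂ are boundedly invertible in B(H). Then the operators 𝑅₁ := S₁ (I − A₁)⁻¹ S₁ and 𝑅₂ := S₂ (I − A₂)⁻¹ S₂ satisfy the first resolvent equation 𝑅₁ − 𝑅₂ = (z₁ − z₂) 𝑅₁ 𝑅₂. -/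
/-!
Push `Sᵢ` through the inverse: `S (1 + S B S)⁻¹ = (1 + S² B)⁻¹ S`, so Tiktopoulos's operators are
`𝑅₁ = (1 + R₁ B)⁻¹ R₁` and `𝑅₂ = R₂ (1 + B R₂)⁻¹`. Writing `E = 1 + R₁ B`, `D = 1 + B R₂`, the
cross terms `R₁ B R₂` cancel in `R₁ D - E R₂ = R₁ - R₂`, so `𝑅₁ - 𝑅₂ = E⁻¹ (R₁ - R₂) D⁻¹` and
`𝑅₁ 𝑅₂ = E⁻¹ R₁ R₂ D⁻¹`; the resolvent equation for `R₁, R₂` transfers to `𝑅₁, 𝑅₂`.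
-/

section OneAddMul

variable {A : Type*} [Ring A]

theorem IsUnit.one_add_mul_comm {a b : A} (h : IsUnit (1 + a * b)) : IsUnit (1 + b * a) := by
  set u := Ring.inverse (1 + a * b)
  refine isUnit_iff_exists.mpr ⟨1 - b * u * a, ?_, ?_⟩
  · calc (1 + b * a) * (1 - b * u * a) = 1 + b * a - b * ((1 + a * b) * u) * a := by noncomm_ring
      _ = 1 := by rw [Ring.mul_inverse_cancel _ h]; noncomm_ring
  · calc (1 - b * u * a) * (1 + b * a) = 1 + b * a - b * (u * (1 + a * b)) * a := by noncomm_ring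
      _ = 1 := by rw [Ring.inverse_mul_cancel _ h]; noncomm_ring

theorem mul_inverse_one_add_mul_comm {a b : A} (h : IsUnit (1 + b * a)) :
    a * Ring.inverse (1 + b * a) = Ring.inverse (1 + a * b) * a := by
  have h' : IsUnit (1 + a * b) := h.one_add_mul_comm
  calc a * Ring.inverse (1 + b * a)
      = Ring.inverse (1 + a * b) * ((1 + a * b) * a) * Ring.inverse (1 + b * a) := by
        rw [← mul_assoc, Ring.inverse_mul_cancel _ h', one_mul]
    _ = Ring.inverse (1 + a * b) * a * ((1 + b * a) * Ring.inverse (1 + b * a)) := by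
        noncomm_ring
    _ = Ring.inverse (1 + a * b) * a := by rw [Ring.mul_inverse_cancel _ h, mul_one]

theorem IsUnit.one_add_sq_mul {s b : A} (h : IsUnit (1 + s * b * s)) : IsUnit (1 + s ^ 2 * b) := by
  simpa only [sq, mul_assoc] using h.one_add_mul_comm (a := s * b) (b := s)

theorem IsUnit.one_add_mul_sq {s b : A} (h : IsUnit (1 + s * b * s)) : IsUnit (1 + b * s ^ 2) := by
  rw [mul_assoc] at h
  simpa only [sq, mul_assoc] using h.one_add_mul_comm

theorem mul_inverse_one_add_mul_mul_eq_inverse_mul {s b : A} (h : IsUnit (1 + s * b * s)) :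
    s * Ring.inverse (1 + s * b * s) * s = Ring.inverse (1 + s ^ 2 * b) * s ^ 2 := by
  rw [mul_inverse_one_add_mul_comm (a := s) (b := s * b) h, sq]
  noncomm_ring

theorem mul_inverse_one_add_mul_mul_eq_mul_inverse {s b : A} (h : IsUnit (1 + s * b * s)) :
    s * Ring.inverse (1 + s * b * s) * s = s ^ 2 * Ring.inverse (1 + b * s ^ 2) := by
  rw [mul_assoc s b s] at h ⊢
  rw [mul_assoc, ← mul_inverse_one_add_mul_comm (a := s) (b := b * s) h.one_add_mul_comm, sq]
  noncomm_ring

theorem inverse_mul_sub_mul_inverse {r₁ r₂ b : A} (h₁ : IsUnit (1 + r₁ * b)) (h₂ : IsUnit (1 + b * r₂)) :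
    Ring.inverse (1 + r₁ * b) * r₁ - r₂ * Ring.inverse (1 + b * r₂)
      = Ring.inverse (1 + r₁ * b) * (r₁ - r₂) * Ring.inverse (1 + b * r₂) := by
  have cross : r₁ * (1 + b * r₂) - (1 + r₁ * b) * r₂ = r₁ - r₂ := by noncomm_ring
  rw [← cross]
  calc Ring.inverse (1 + r₁ * b) * r₁ - r₂ * Ring.inverse (1 + b * r₂)
      = Ring.inverse (1 + r₁ * b) * r₁ * ((1 + b * r₂) * Ring.inverse (1 + b * r₂))
        - Ring.inverse (1 + r₁ * b) * (1 + r₁ * b) * r₂ * Ring.inverse (1 + b * r₂) := by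
        rw [Ring.mul_inverse_cancel _ h₂, Ring.inverse_mul_cancel _ h₁, mul_one, one_mul]
    _ = _ := by noncomm_ring

end OneAddMul

theorem tiktopoulos_first_resolvent_identity_general
    {H : Type*} [NormedAddCommGroup H] [InnerProductSpace ℂ H]
    (z₁ z₂ : ℂ) (R₁ R₂ S₁ S₂ B A₁ A₂ : H →L[ℂ] H)
    (hS₁ : S₁ ^ 2 = R₁) (hS₂ : S₂ ^ 2 = R₂)
    (hres : R₁ - R₂ = (z₁ - z₂) • (R₁ * R₂))
    (hA₁ : A₁ = -(S₁ * B * S₁)) (hA₂ : A₂ = -(S₂ * B * S₂))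
    (h₁ : IsUnit (1 - A₁)) (h₂ : IsUnit (1 - A₂)) :
    S₁ * Ring.inverse (1 - A₁) * S₁ - S₂ * Ring.inverse (1 - A₂) * S₂
      = (z₁ - z₂) •
        ((S₁ * Ring.inverse (1 - A₁) * S₁) * (S₂ * Ring.inverse (1 - A₂) * S₂)) := by
  subst hA₁ hA₂
  simp only [sub_neg_eq_add] at h₁ h₂ ⊢
  have hE : IsUnit (1 + R₁ * B) := hS₁ ▸ h₁.one_add_sq_mul
  have hD : IsUnit (1 + B * R₂) := hS₂ ▸ h₂.one_add_mul_sq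
  rw [mul_inverse_one_add_mul_mul_eq_inverse_mul h₁, mul_inverse_one_add_mul_mul_eq_mul_inverse h₂,
    hS₁, hS₂, inverse_mul_sub_mul_inverse hE hD, hres]
  simp only [mul_smul_comm, smul_mul_assoc, mul_assoc]

/-- The first resolvent identity for the operators defined by Tiktopoulos's formula.
If `S₁² = R₁`, `S₂² = R₂`, `R₁ - R₂ = (z₁ - z₂) R₁ R₂`, and `I - A₁`, `I - A₂` with
`Aᵢ = -Sᵢ B Sᵢ` are boundedly invertible, then `𝑅ᵢ := Sᵢ (I - Aᵢ)⁻¹ Sᵢ` satisfy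
`𝑅₁ - 𝑅₂ = (z₁ - z₂) 𝑅₁ 𝑅₂`. -/
theorem tiktopoulos_first_resolvent_identity
    {H : Type*} [NormedAddCommGroup H] [InnerProductSpace ℂ H] [CompleteSpace H]
    (z₁ z₂ : ℂ) (R₁ R₂ S₁ S₂ B A₁ A₂ : H →L[ℂ] H)
    (hS₁ : S₁ ^ 2 = R₁) (hS₂ : S₂ ^ 2 = R₂)
    (hres : R₁ - R₂ = (z₁ - z₂) • (R₁ * R₂))
    (hA₁ : A₁ = -(S₁ * B * S₁)) (hA₂ : A₂ = -(S₂ * B * S₂))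
    (h₁ : IsUnit (1 - A₁)) (h₂ : IsUnit (1 - A₂)) :
    S₁ * Ring.inverse (1 - A₁) * S₁ - S₂ * Ring.inverse (1 - A₂) * S₂
      = (z₁ - z₂) •
        ((S₁ * Ring.inverse (1 - A₁) * S₁) * (S₂ * Ring.inverse (1 - A₂) * S₂)) :=
  tiktopoulos_first_resolvent_identity_general z₁ z₂ R₁ R₂ S₁ S₂ B A₁ A₂ hS₁ hS₂ hres hA₁ hA₂ h₁ h₂
end

section
/- Let κ ∈ (0, ∞) and let W : ℝ → ℂ be measurable. Then (1/(2π)) · ∫_ℝ ∫_ℝ |W(ξ − ξ')|² / ( (ξ² + κ²) · ((ξ')² + κ²) ) dξ' dξ = (1/κ) · ∫_ℝ |W(η)|² / (η² + 4κ²) dη, where both sides are Lebesgue integrals of nonnegative measurable functions with values in [0, ∞]. -/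
/-!
Substituting `ξ' = ξ - η` and exchanging the order of integration turns the left side into
`(1/(2π)) ∫ |W(η)|² (∫ dξ / ((ξ² + κ²)((ξ - η)² + κ²))) dη`. The inner integral, the
autocorrelation of the Cauchy kernel of width `κ`, is the Cauchy kernel of width `2κ`:
it equals `2π / (κ (η² + 4κ²))`, which is read off from an explicit primitive for `η ≠ 0`.
-/

open MeasureTheory Set Filter Real Topology
open scoped ENNReal

section Autocorrelation

variable {G : Type*} [MeasurableSpace G] [AddCommGroup G] [MeasurableAdd₂ G] [MeasurableNeg G]
  {μ : Measure G} [SFinite μ] [μ.IsAddLeftInvariant] [μ.IsNegInvariant]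

theorem lintegral_lintegral_mul_sub_mul {f k : G → ℝ≥0∞} (hf : Measurable f) (hk : Measurable k) :
    ∫⁻ x, ∫⁻ y, f (x - y) * (k x * k y) ∂μ ∂μ = ∫⁻ z, f z * ∫⁻ x, k x * k (x - z) ∂μ ∂μ := by
  calc ∫⁻ x, ∫⁻ y, f (x - y) * (k x * k y) ∂μ ∂μ
      = ∫⁻ x, ∫⁻ z, f z * (k x * k (x - z)) ∂μ ∂μ := by
        refine lintegral_congr fun x => ?_
        simpa only [sub_sub_cancel] using
          lintegral_sub_left_eq_self (μ := μ) (fun z => f z * (k x * k (x - z))) x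
    _ = ∫⁻ z, ∫⁻ x, f z * (k x * k (x - z)) ∂μ ∂μ :=
        lintegral_lintegral_swap (by fun_prop)
    _ = ∫⁻ z, f z * ∫⁻ x, k x * k (x - z) ∂μ ∂μ :=
        lintegral_congr fun z => lintegral_const_mul _ (by fun_prop)

end Autocorrelation

section CauchyKernel

-- Found by partial fractions; singular at `η = 0`, a null set of shifts.
noncomputable def invSqAddSqMulPrimitive (a η x : ℝ) : ℝ :=
  (η ^ 2 + 4 * a ^ 2)⁻¹ * (η⁻¹ * (log (x ^ 2 + a ^ 2) - log ((x - η) ^ 2 + a ^ 2))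
    + a⁻¹ * (arctan (x / a) + arctan ((x - η) / a)))

variable {a η : ℝ}

theorem hasDerivAt_invSqAddSqMulPrimitive (ha : 0 < a) (hη : η ≠ 0) (x : ℝ) :
    HasDerivAt (invSqAddSqMulPrimitive a η) ((x ^ 2 + a ^ 2)⁻¹ * ((x - η) ^ 2 + a ^ 2)⁻¹) x := by
  have h₁ : x ^ 2 + a ^ 2 ≠ 0 := by positivity
  have h₂ : (x - η) ^ 2 + a ^ 2 ≠ 0 := by positivity
  have hx : HasDerivAt (fun x : ℝ => x ^ 2 + a ^ 2) (2 * x) x := by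
    simpa using (hasDerivAt_pow 2 x).add_const (a ^ 2)
  have hxη : HasDerivAt (fun x : ℝ => (x - η) ^ 2 + a ^ 2) (2 * (x - η)) x := by
    simpa using (((hasDerivAt_id' x).sub_const η).pow 2).add_const (a ^ 2)
  have hlog := ((hx.log h₁).sub (hxη.log h₂)).const_mul η⁻¹
  have harctan := ((((hasDerivAt_id' x).div_const a).arctan).add
    ((((hasDerivAt_id' x).sub_const η).div_const a).arctan)).const_mul a⁻¹
  refine ((hlog.add harctan).const_mul (η ^ 2 + 4 * a ^ 2)⁻¹).congr_deriv ?_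
  have : η ^ 2 + 4 * a ^ 2 ≠ 0 := by positivity
  field_simp
  ring

theorem invSqAddSqMulPrimitive_neg (x : ℝ) :
    invSqAddSqMulPrimitive a η (-x) = -invSqAddSqMulPrimitive a (-η) x := by
  simp only [invSqAddSqMulPrimitive, neg_div, arctan_neg, neg_sq, inv_neg]
  rw [show (-x - η) = -(x + η) by ring, neg_div, arctan_neg, neg_sq, sub_neg_eq_add]
  ring

theorem tendsto_log_sq_add_sq_sub_log_sub_sq_add_sq (ha : 0 < a) :
    Tendsto (fun x => log (x ^ 2 + a ^ 2) - log ((x - η) ^ 2 + a ^ 2)) atTop (𝓝 0) := by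
  set g : ℝ → ℝ := fun t => log (1 + a ^ 2 * t ^ 2) - log ((1 - η * t) ^ 2 + a ^ 2 * t ^ 2)
  have hg : ContinuousAt g 0 :=
    (ContinuousAt.log (by fun_prop) (by simp)).sub (ContinuousAt.log (by fun_prop) (by simp))
  have hg0 : g 0 = 0 := by simp [g]
  refine (hg0 ▸ hg.tendsto.comp tendsto_inv_atTop_zero).congr' ?_
  filter_upwards [eventually_gt_atTop 0] with x hx
  have hx2 : x ^ 2 ≠ 0 := by positivity
  have e₁ : x ^ 2 + a ^ 2 = x ^ 2 * (1 + a ^ 2 * x⁻¹ ^ 2) := by field_simp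
  have e₂ : (x - η) ^ 2 + a ^ 2 = x ^ 2 * ((1 - η * x⁻¹) ^ 2 + a ^ 2 * x⁻¹ ^ 2) := by
    field_simp
  simp only [Function.comp, g]
  rw [e₁, e₂, log_mul hx2 (by positivity), log_mul hx2 (by positivity)]
  ring

theorem tendsto_invSqAddSqMulPrimitive_atTop (ha : 0 < a) :
    Tendsto (invSqAddSqMulPrimitive a η) atTop (𝓝 (π / (a * (η ^ 2 + 4 * a ^ 2)))) := by
  have harctan {c : ℝ} : Tendsto (fun x => arctan ((x + c) / a)) atTop (𝓝 (π / 2)) :=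
    (tendsto_nhds_of_tendsto_nhdsWithin tendsto_arctan_atTop).comp
      ((tendsto_atTop_add_const_right _ c tendsto_id).atTop_div_const ha)
  have hlim := (((tendsto_log_sq_add_sq_sub_log_sub_sq_add_sq (η := η) ha).const_mul η⁻¹).add
    (((harctan (c := 0)).add (harctan (c := -η))).const_mul a⁻¹)).const_mul (η ^ 2 + 4 * a ^ 2)⁻¹
  convert hlim using 2
  · simp [invSqAddSqMulPrimitive, sub_eq_add_neg]
  · field_simp
    ring

theorem tendsto_invSqAddSqMulPrimitive_atBot (ha : 0 < a) :
    Tendsto (invSqAddSqMulPrimitive a η) atBot (𝓝 (-(π / (a * (η ^ 2 + 4 * a ^ 2))))) := by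
  have h := ((tendsto_invSqAddSqMulPrimitive_atTop (η := -η) ha).neg).comp tendsto_neg_atBot_atTop
  rw [neg_sq] at h
  refine h.congr fun x => ?_
  simp [invSqAddSqMulPrimitive_neg]

theorem integrable_inv_sq_add_sq (ha : a ≠ 0) : Integrable fun x : ℝ => (x ^ 2 + a ^ 2)⁻¹ := by
  refine ((integrable_inv_one_add_sq.comp_div ha).const_mul (a ^ 2)⁻¹).congr
    (Eventually.of_forall fun x => ?_)
  field_simp
  ring

theorem integrable_inv_sq_add_sq_mul_inv_sub_sq_add_sq (ha : 0 < a) (η : ℝ) :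
    Integrable fun x : ℝ => (x ^ 2 + a ^ 2)⁻¹ * ((x - η) ^ 2 + a ^ 2)⁻¹ := by
  refine ((integrable_inv_sq_add_sq ha.ne').mul_const (a ^ 2)⁻¹).mono'
    (by fun_prop) (Eventually.of_forall fun x => ?_)
  rw [Real.norm_of_nonneg (by positivity)]
  gcongr
  nlinarith [sq_nonneg (x - η)]

theorem integral_inv_sq_add_sq_mul_inv_sub_sq_add_sq (ha : 0 < a) (hη : η ≠ 0) :
    ∫ x : ℝ, (x ^ 2 + a ^ 2)⁻¹ * ((x - η) ^ 2 + a ^ 2)⁻¹ = 2 * π / (a * (η ^ 2 + 4 * a ^ 2)) := by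
  rw [integral_of_hasDerivAt_of_tendsto (hasDerivAt_invSqAddSqMulPrimitive ha hη)
    (integrable_inv_sq_add_sq_mul_inv_sub_sq_add_sq ha η)
    (tendsto_invSqAddSqMulPrimitive_atBot ha) (tendsto_invSqAddSqMulPrimitive_atTop ha)]
  ring

theorem lintegral_inv_sq_add_sq_mul_inv_sub_sq_add_sq (ha : 0 < a) (hη : η ≠ 0) :
    ∫⁻ x : ℝ, ENNReal.ofReal (x ^ 2 + a ^ 2)⁻¹ * ENNReal.ofReal ((x - η) ^ 2 + a ^ 2)⁻¹
      = ENNReal.ofReal (2 * π / a) * ENNReal.ofReal (η ^ 2 + 4 * a ^ 2)⁻¹ := by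
  rw [lintegral_congr fun x => (ENNReal.ofReal_mul (by positivity)).symm,
    ← ofReal_integral_eq_lintegral_ofReal (integrable_inv_sq_add_sq_mul_inv_sub_sq_add_sq ha η)
      (Eventually.of_forall fun x => by positivity),
    integral_inv_sq_add_sq_mul_inv_sub_sq_add_sq ha hη, ← ENNReal.ofReal_mul (by positivity),
    div_mul_eq_div_div, div_eq_mul_inv]

end CauchyKernel

/-- For `κ > 0` and measurable `W : ℝ → ℂ`,
`(1/(2π)) ∬ |W(ξ - ξ')|² / ((ξ² + κ²)((ξ')² + κ²)) dξ' dξ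
  = (1/κ) ∫ |W(η)|² / (η² + 4κ²) dη`,
as an identity of Lebesgue integrals of nonnegative measurable functions with values in
`[0, ∞]`. -/
theorem hilbertSchmidt_norm_identity_fourier (κ : ℝ) (hκ : 0 < κ)
    (W : ℝ → ℂ) (hW : Measurable W) :
    ENNReal.ofReal (1 / (2 * Real.pi)) *
      ∫⁻ ξ : ℝ, ∫⁻ ξ' : ℝ,
        ENNReal.ofReal (‖W (ξ - ξ')‖ ^ 2 / ((ξ ^ 2 + κ ^ 2) * (ξ' ^ 2 + κ ^ 2)))
      = ENNReal.ofReal (1 / κ) *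
        ∫⁻ η : ℝ, ENNReal.ofReal (‖W η‖ ^ 2 / (η ^ 2 + 4 * κ ^ 2)) := by
  have hsplit (ξ ξ' : ℝ) :
      ENNReal.ofReal (‖W (ξ - ξ')‖ ^ 2 / ((ξ ^ 2 + κ ^ 2) * (ξ' ^ 2 + κ ^ 2)))
        = ENNReal.ofReal (‖W (ξ - ξ')‖ ^ 2) *
          (ENNReal.ofReal (ξ ^ 2 + κ ^ 2)⁻¹ * ENNReal.ofReal (ξ' ^ 2 + κ ^ 2)⁻¹) := by
    rw [div_eq_mul_inv, mul_inv, ENNReal.ofReal_mul (by positivity),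
      ENNReal.ofReal_mul (by positivity)]
  have hinner : ∀ᵐ η : ℝ, ENNReal.ofReal (‖W η‖ ^ 2) *
        ∫⁻ ξ, ENNReal.ofReal (ξ ^ 2 + κ ^ 2)⁻¹ * ENNReal.ofReal ((ξ - η) ^ 2 + κ ^ 2)⁻¹
      = ENNReal.ofReal (2 * π / κ) * ENNReal.ofReal (‖W η‖ ^ 2 / (η ^ 2 + 4 * κ ^ 2)) := by
    filter_upwards [Measure.ae_ne volume 0] with η hη
    rw [lintegral_inv_sq_add_sq_mul_inv_sub_sq_add_sq hκ hη, div_eq_mul_inv (‖W η‖ ^ 2),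
      ENNReal.ofReal_mul (by positivity)]
    ring
  have hconv := lintegral_lintegral_mul_sub_mul (μ := volume)
    (f := fun η => ENNReal.ofReal (‖W η‖ ^ 2)) (k := fun ξ => ENNReal.ofReal (ξ ^ 2 + κ ^ 2)⁻¹)
    (by fun_prop) (by fun_prop)
  simp_rw [hsplit]
  rw [hconv, lintegral_congr_ae hinner,
    lintegral_const_mul' _ _ ENNReal.ofReal_ne_top, ← mul_assoc,
    ← ENNReal.ofReal_mul (by positivity)]
  congr 2
  field_simp
end

section
/- Let φ, ψ : ℝ → ℂ be Schwartz functions. Then ∫_ℝ ( |φ(x)ψ(x)|² + |(φψ)'(x)|² ) dx ≤ 2 · ( ∫_ℝ ( |φ(x)|² + |φ'(x)|² ) dx ) · ( ∫_ℝ ( |ψ(x)|² + |ψ'(x)|² ) dx ); that is, ‖φψ‖_{H¹(ℝ)}² ≤ 2 ‖φ‖_{H¹(ℝ)}² ‖ψ‖_{H¹(ℝ)}². -/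
/-!
Writing `u = ‖f‖²`, the fundamental theorem of calculus on both half-lines gives
`2 u(x) ≤ ∫ |u'| ≤ ∫ 2‖f‖‖f'‖ ≤ ‖f‖²_{H¹}`, i.e. `‖f‖²_∞ ≤ ½ ‖f‖²_{H¹}`. Pointwise,
`|φψ|² + |φ'ψ + φψ'|² ≤ 2|ψ|² (|φ|² + |φ'|²) + 2|φ|² (|ψ|² + |ψ'|²)`, and bounding `2|ψ|²` and
`2|φ|²` by the squared `H¹`-norms before integrating gives the constant `2`.
-/

open MeasureTheory Filter Set Topology

theorem two_mul_le_integral_abs_of_hasDerivAt {u u' : ℝ → ℝ}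
    (hderiv : ∀ t, HasDerivAt u (u' t) t) (hint : Integrable u')
    (hbot : Tendsto u atBot (𝓝 0)) (htop : Tendsto u atTop (𝓝 0)) (x : ℝ) :
    2 * u x ≤ ∫ t, |u' t| := by
  have hleft : ∫ t in Iic x, u' t = u x := by
    simpa using integral_Iic_of_hasDerivAt_of_tendsto' (fun t _ => hderiv t) hint.integrableOn hbot
  have hright : ∫ t in Ioi x, -u' t = u x := by
    rw [integral_neg, integral_Ioi_of_hasDerivAt_of_tendsto' (fun t _ => hderiv t)
      hint.integrableOn htop]
    ring
  calc 2 * u x = (∫ t in Iic x, u' t) + ∫ t in Ioi x, -u' t := by rw [hleft, hright]; ring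
    _ ≤ (∫ t in Iic x, |u' t|) + ∫ t in Ioi x, |u' t| := by
      exact add_le_add
        (setIntegral_mono hint.integrableOn hint.abs.integrableOn fun t => le_abs_self _)
        (setIntegral_mono hint.neg.integrableOn hint.abs.integrableOn fun t => neg_le_abs _)
    _ = ∫ t, |u' t| := by
      rw [← compl_Iic]
      exact integral_add_compl measurableSet_Iic hint.abs

theorem two_mul_sq_norm_le_integral_sq_norm_add_sq_norm_deriv {F : Type*}
    [NormedAddCommGroup F] [InnerProductSpace ℝ F] [CompleteSpace F] {f : ℝ → F} (hf : Differentiable ℝ f)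
    (hf0 : Tendsto f (cocompact ℝ) (𝓝 0))
    (hint : Integrable fun t => ‖f t‖ ^ 2 + ‖deriv f t‖ ^ 2) (x : ℝ) :
    2 * ‖f x‖ ^ 2 ≤ ∫ t, ‖f t‖ ^ 2 + ‖deriv f t‖ ^ 2 := by
  have hu0 : Tendsto (fun t => ‖f t‖ ^ 2) (cocompact ℝ) (𝓝 0) := by
    simpa using (hf0.norm.pow 2)
  have hbound : ∀ t, |2 * inner ℝ (f t) (deriv f t)| ≤ ‖f t‖ ^ 2 + ‖deriv f t‖ ^ 2 := fun t =>
    calc |2 * inner ℝ (f t) (deriv f t)| ≤ 2 * (‖f t‖ * ‖deriv f t‖) := by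
          rw [abs_mul, abs_two]; gcongr; exact abs_real_inner_le_norm _ _
      _ ≤ ‖f t‖ ^ 2 + ‖deriv f t‖ ^ 2 := by rw [← mul_assoc]; exact two_mul_le_add_sq _ _
  have hmeas : AEStronglyMeasurable (fun t => 2 * inner ℝ (f t) (deriv f t)) volume :=
    (hf.continuous.aestronglyMeasurable.inner (aestronglyMeasurable_deriv f _)).const_mul 2
  have hu'int : Integrable fun t => 2 * inner ℝ (f t) (deriv f t) :=
    hint.mono' hmeas (Eventually.of_forall fun t => (Real.norm_eq_abs _).le.trans (hbound t))
  calc 2 * ‖f x‖ ^ 2 ≤ ∫ t, |2 * inner ℝ (f t) (deriv f t)| :=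
        two_mul_le_integral_abs_of_hasDerivAt (fun t => (hf t).hasDerivAt.norm_sq) hu'int
          (hu0.mono_left atBot_le_cocompact) (hu0.mono_left atTop_le_cocompact) x
    _ ≤ ∫ t, ‖f t‖ ^ 2 + ‖deriv f t‖ ^ 2 := integral_mono hu'int.abs hint hbound

theorem sq_norm_mul_add_sq_norm_add_mul_le {R : Type*} [SeminormedRing R] (z z' w w' : R) :
    ‖z * w‖ ^ 2 + ‖z' * w + z * w'‖ ^ 2 ≤
      2 * ‖w‖ ^ 2 * (‖z‖ ^ 2 + ‖z'‖ ^ 2) + 2 * ‖z‖ ^ 2 * (‖w‖ ^ 2 + ‖w'‖ ^ 2) := by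
  have h₁ : ‖z * w‖ ≤ ‖z‖ * ‖w‖ := norm_mul_le _ _
  have h₂ : ‖z' * w + z * w'‖ ≤ ‖z'‖ * ‖w‖ + ‖z‖ * ‖w'‖ :=
    (norm_add_le _ _).trans (add_le_add (norm_mul_le _ _) (norm_mul_le _ _))
  have h₁' := pow_le_pow_left₀ (norm_nonneg _) h₁ 2
  have h₂' := pow_le_pow_left₀ (norm_nonneg _) h₂ 2
  nlinarith [sq_nonneg (‖z'‖ * ‖w‖ - ‖z‖ * ‖w'‖), sq_nonneg (‖z‖ * ‖w‖)]

namespace SchwartzMap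

theorem integrable_sq_norm_add_sq_norm_deriv {F : Type*} [NormedAddCommGroup F]
    [NormedSpace ℝ F] (f : 𝓢(ℝ, F)) :
    Integrable fun t => ‖f t‖ ^ 2 + ‖deriv f t‖ ^ 2 := by
  have hf := (f.memLp 2).integrable_norm_pow two_ne_zero
  have hf' := ((derivCLM ℝ F f).memLp 2).integrable_norm_pow two_ne_zero
  simp only [derivCLM_apply] at hf'
  exact hf.add hf'

theorem two_mul_sq_norm_le_integral {F : Type*} [NormedAddCommGroup F]
    [InnerProductSpace ℝ F] [CompleteSpace F] (f : 𝓢(ℝ, F)) (x : ℝ) :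
    2 * ‖f x‖ ^ 2 ≤ ∫ t, ‖f t‖ ^ 2 + ‖deriv f t‖ ^ 2 :=
  two_mul_sq_norm_le_integral_sq_norm_add_sq_norm_deriv f.differentiable f.tendsto_cocompact
    f.integrable_sq_norm_add_sq_norm_deriv x

end SchwartzMap

/-- The algebra property of the `H¹(ℝ)`-norm: for Schwartz functions `φ, ψ`,
`‖φψ‖²_{H¹} ≤ 2 ‖φ‖²_{H¹} ‖ψ‖²_{H¹}`, where `‖φ‖²_{H¹} = ∫ (|φ|² + |φ'|²)`. -/
theorem h1_norm_algebra (φ ψ : SchwartzMap ℝ ℂ) :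
    (∫ x : ℝ, (‖φ x * ψ x‖ ^ 2 + ‖deriv (fun t => φ t * ψ t) x‖ ^ 2))
      ≤ 2 * (∫ x : ℝ, (‖φ x‖ ^ 2 + ‖deriv (fun t => φ t) x‖ ^ 2)) *
          (∫ x : ℝ, (‖ψ x‖ ^ 2 + ‖deriv (fun t => ψ t) x‖ ^ 2)) := by
  set Φ := ∫ x : ℝ, (‖φ x‖ ^ 2 + ‖deriv (fun t => φ t) x‖ ^ 2)
  set Ψ := ∫ x : ℝ, (‖ψ x‖ ^ 2 + ‖deriv (fun t => ψ t) x‖ ^ 2)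
  have hφ := φ.integrable_sq_norm_add_sq_norm_deriv
  have hψ := ψ.integrable_sq_norm_add_sq_norm_deriv
  have hpointwise (x : ℝ) :
      ‖φ x * ψ x‖ ^ 2 + ‖deriv (fun t => φ t * ψ t) x‖ ^ 2 ≤
        Ψ * (‖φ x‖ ^ 2 + ‖deriv φ x‖ ^ 2) + Φ * (‖ψ x‖ ^ 2 + ‖deriv ψ x‖ ^ 2) := by
    rw [deriv_fun_mul φ.differentiableAt ψ.differentiableAt]
    refine (sq_norm_mul_add_sq_norm_add_mul_le _ _ _ _).trans ?_
    gcongr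
    exacts [ψ.two_mul_sq_norm_le_integral x, φ.two_mul_sq_norm_le_integral x]
  calc _ ≤ ∫ x, Ψ * (‖φ x‖ ^ 2 + ‖deriv φ x‖ ^ 2) + Φ * (‖ψ x‖ ^ 2 + ‖deriv ψ x‖ ^ 2) :=
        integral_mono_of_nonneg (Eventually.of_forall fun x => by positivity)
          ((hφ.const_mul Ψ).add (hψ.const_mul Φ)) (Eventually.of_forall hpointwise)
    _ = 2 * Φ * Ψ := by
      rw [integral_add (hφ.const_mul Ψ) (hψ.const_mul Φ), integral_const_mul, integral_const_mul]
      ring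
end
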